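/- The function u(x) = [ tanh² x, −sech² x ]ᵀ satisfies H₀ u = u, where H₀ = diag(−∂ₓ²+1, ∂ₓ²−1) + sech²x · [[−4,−2],[2,4]]. Moreover u is bounded on ℝ but not in L²(ℝ)×L²(ℝ) (its first component tends to 1 at ±∞), i.e., it is a threshold resonance. -/

import Mathlib

/-! With `s = sech²` one has `tanh² = 1 - s` and `s'' = 4s - 6s²`, so both components of
`H₀u = u` reduce to polynomial identities in `s`. Since `cosh x ≥ |x|`, `s → 0` and
`tanh² → 1` at `±∞`, and a function with a nonzero limit at `+∞` lies in no `Lᵖ`, `p < ∞`. -/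

open Filter MeasureTheory Topology

namespace Real

theorem tanh_sq_eq_one_sub_sech_sq (x : ℝ) : tanh x ^ 2 = 1 - (1 / cosh x) ^ 2 := by
  have hc := (cosh_pos x).ne'
  rw [tanh_eq_sinh_div_cosh]
  field_simp
  linarith [cosh_sq_sub_sinh_sq x]

theorem sech_sq_le_one (x : ℝ) : (1 / cosh x) ^ 2 ≤ 1 := by
  rw [div_pow, one_pow, div_le_one (by positivity)]
  nlinarith [one_le_cosh x]

theorem hasDerivAt_tanh (x : ℝ) : HasDerivAt tanh ((1 / cosh x) ^ 2) x := by
  have hc := (cosh_pos x).ne'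
  have h := (hasDerivAt_sinh x).div (hasDerivAt_cosh x) hc
  rw [show sinh / cosh = tanh from funext fun y => (tanh_eq_sinh_div_cosh y).symm] at h
  refine h.congr_deriv ?_
  field_simp
  linarith [cosh_sq_sub_sinh_sq x]

theorem hasDerivAt_sech (x : ℝ) :
    HasDerivAt (fun y => 1 / cosh y) (-(1 / cosh x) * tanh x) x := by
  have hc := (cosh_pos x).ne'
  refine ((hasDerivAt_const x 1).div (hasDerivAt_cosh x) hc).congr_deriv ?_
  rw [tanh_eq_sinh_div_cosh]
  field_simp
  ring

theorem hasDerivAt_sech_sq (x : ℝ) :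
    HasDerivAt (fun y => (1 / cosh y) ^ 2) (-2 * tanh x * (1 / cosh x) ^ 2) x :=
  ((hasDerivAt_sech x).pow 2).congr_deriv (by ring)

theorem deriv_sech_sq :
    deriv (fun y => (1 / cosh y) ^ 2) = fun x => -2 * tanh x * (1 / cosh x) ^ 2 :=
  funext fun x => (hasDerivAt_sech_sq x).deriv

theorem deriv_deriv_sech_sq (x : ℝ) :
    deriv (deriv fun y => (1 / cosh y) ^ 2) x = 4 * (1 / cosh x) ^ 2 - 6 * (1 / cosh x) ^ 4 := by
  rw [deriv_sech_sq]
  refine ((((hasDerivAt_tanh x).const_mul (-2)).mul (hasDerivAt_sech_sq x)).congr_deriv ?_).deriv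
  linear_combination 4 * (1 / cosh x) ^ 2 * tanh_sq_eq_one_sub_sech_sq x

theorem abs_le_cosh (x : ℝ) : |x| ≤ cosh x := by
  rw [← cosh_abs]
  exact (self_le_sinh_iff.2 (abs_nonneg x)).trans (sinh_lt_cosh _).le

theorem tendsto_cosh_atTop : Tendsto cosh atTop atTop :=
  tendsto_atTop_mono abs_le_cosh tendsto_abs_atTop_atTop

theorem tendsto_cosh_atBot : Tendsto cosh atBot atTop :=
  tendsto_atTop_mono abs_le_cosh tendsto_abs_atBot_atTop

theorem tendsto_tanh_sq {l : Filter ℝ} (h : Tendsto cosh l atTop) :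
    Tendsto (fun x => tanh x ^ 2) l (𝓝 1) := by
  simp_rw [tanh_sq_eq_one_sub_sech_sq, one_div]
  simpa using tendsto_const_nhds.sub ((tendsto_inv_atTop_zero.comp h).pow 2)

end Real

open scoped ENNReal NNReal in
theorem not_memLp_of_tendsto_atTop {E : Type*} [NormedAddCommGroup E] {f : ℝ → E} {c : E}
    (hf : Tendsto f atTop (𝓝 c)) (hc : c ≠ 0) {p : ℝ≥0∞} (hp0 : p ≠ 0) (hp : p ≠ ∞) :
    ¬ MemLp f p volume := by
  intro hfp
  set ε : ℝ≥0 := ‖c‖₊ / 2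
  have hε : ε < ‖c‖₊ := NNReal.half_lt_self (nnnorm_ne_zero_iff.2 hc)
  obtain ⟨N, hN⟩ := eventually_atTop.1 (hf.nnnorm.eventually (eventually_gt_nhds hε))
  have hsub : Set.Ici N ⊆ {x | ε ≤ ‖f x‖₊} := fun x hx => (hN x hx).le
  have := (measure_mono hsub).trans_lt (hfp.meas_ge_lt_top hp0 hp (by simpa [ε] using hc))
  simp at this

/-- The threshold resonance `u = [tanh²x, −sech²x]ᵀ` of `H₀`: `H₀u = u`,
`u` is bounded, its first component tends to `1` at `±∞`, and `u ∉ L²×L²`. -/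
theorem stmt7 :
    let sech : ℝ → ℝ := fun y => 1 / Real.cosh y
    let u1 : ℝ → ℝ := fun y => (Real.tanh y)^2
    let u2 : ℝ → ℝ := fun y => -(sech y)^2
    (∀ x, -(deriv (deriv u1) x) + u1 x - 4 * (sech x)^2 * u1 x - 2 * (sech x)^2 * u2 x = u1 x) ∧
    (∀ x, deriv (deriv u2) x - u2 x + 2 * (sech x)^2 * u1 x + 4 * (sech x)^2 * u2 x = u2 x) ∧
    (∃ C : ℝ, ∀ x, |u1 x| ≤ C ∧ |u2 x| ≤ C) ∧
    Tendsto u1 atTop (nhds 1) ∧ Tendsto u1 atBot (nhds 1) ∧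
    ¬ MemLp u1 2 volume := by
  intro sech u1 u2
  have hu1 : u1 = fun y => 1 - (1 / Real.cosh y) ^ 2 := funext Real.tanh_sq_eq_one_sub_sech_sq
  have hdd1 (x : ℝ) : deriv (deriv u1) x = -deriv (deriv fun y => (1 / Real.cosh y) ^ 2) x := by
    simp only [hu1, deriv_const_sub', deriv.fun_neg]
  have hdd2 (x : ℝ) : deriv (deriv u2) x = -deriv (deriv fun y => (1 / Real.cosh y) ^ 2) x := by
    simp only [u2, sech, deriv.fun_neg', deriv.fun_neg]
  have h_top : Tendsto u1 atTop (𝓝 1) := Real.tendsto_tanh_sq Real.tendsto_cosh_atTop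
  refine ⟨fun x => ?_, fun x => ?_, ⟨1, fun x => ⟨?_, ?_⟩⟩, h_top,
    Real.tendsto_tanh_sq Real.tendsto_cosh_atBot, not_memLp_of_tendsto_atTop h_top one_ne_zero
      two_ne_zero ENNReal.ofNat_ne_top⟩
  · rw [hdd1, Real.deriv_deriv_sech_sq, hu1]
    ring
  · rw [hdd2, Real.deriv_deriv_sech_sq, hu1]
    ring
  · exact (abs_of_nonneg (sq_nonneg _)).trans_le (Real.tanh_sq_lt_one x).le
  · simpa [u2, sech] using Real.sech_sq_le_one x
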